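/- arXiv:1904.06872 — 3 statements merged into one kernel-verified Lean document; each statement's English description precedes it below -/
import Mathlib

section
/- Let 1 ≤ m ≤ n, and let ι : S_m → S_n be the canonical embedding for which ι(π) acts as π on {1,…,m} and fixes each point of {m+1,…,n}. Let η : S_m × S_n → ℂ satisfy η(σ₁ ∘ π, σ₂ ∘ ι(π)) = η(σ₁, σ₂) for all σ₁ ∈ S_m, σ₂ ∈ S_n and π ∈ S_m. Then ∑_{σ₁ ∈ S_m} ∑_{σ₂ ∈ S_n} sgn(σ₁) · sgn(σ₂) · η(σ₁, σ₂) = m! · ∑_{σ ∈ S_n} sgn(σ) · η(id_m, σ), where id_m ∈ S_m is the identity permutation. -/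
/-- The unequal-size analogue of Lemma 1 (Lemma 4, Appendix F of the paper):
`ι : S_m → S_n` is the canonical embedding acting as `π` on the first `m` points and
fixing the rest; a double signed permutation sum whose summand is invariant under
simultaneous right-composition with `(π, ι π)` collapses to `m!` times a single sum. -/
theorem double_signed_perm_sum_collapse_unequal (m n : ℕ) (hm : 1 ≤ m) (hmn : m ≤ n)
    (η : Equiv.Perm (Fin m) → Equiv.Perm (Fin n) → ℂ)
    (hη : ∀ (σ₁ : Equiv.Perm (Fin m)) (σ₂ : Equiv.Perm (Fin n)) (π : Equiv.Perm (Fin m)),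
      η (σ₁ * π) (σ₂ * π.viaFintypeEmbedding (Fin.castLEEmb hmn)) = η σ₁ σ₂) :
    (∑ σ₁ : Equiv.Perm (Fin m), ∑ σ₂ : Equiv.Perm (Fin n),
        ((Equiv.Perm.sign σ₁ : ℤ) : ℂ) * ((Equiv.Perm.sign σ₂ : ℤ) : ℂ) * η σ₁ σ₂)
      = (m.factorial : ℂ) *
          ∑ σ : Equiv.Perm (Fin n), ((Equiv.Perm.sign σ : ℤ) : ℂ) * η 1 σ := by
  have key : ∀ σ₁ : Equiv.Perm (Fin m),
      (∑ σ₂ : Equiv.Perm (Fin n),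
        ((Equiv.Perm.sign σ₁ : ℤ) : ℂ) * ((Equiv.Perm.sign σ₂ : ℤ) : ℂ) * η σ₁ σ₂)
      = ∑ σ : Equiv.Perm (Fin n), ((Equiv.Perm.sign σ : ℤ) : ℂ) * η 1 σ := by
    intro σ₁
    rw [← Equiv.sum_comp
      (Equiv.mulRight (σ₁.viaFintypeEmbedding (Fin.castLEEmb hmn)))
      (fun σ₂ => ((Equiv.Perm.sign σ₁ : ℤ) : ℂ) * ((Equiv.Perm.sign σ₂ : ℤ) : ℂ) * η σ₁ σ₂)]
    refine Finset.sum_congr rfl fun τ _ => ?_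
    simp only [Equiv.coe_mulRight]
    have h1 : η σ₁ (τ * σ₁.viaFintypeEmbedding (Fin.castLEEmb hmn)) = η 1 τ := by
      have := hη 1 τ σ₁
      simpa using this
    rw [h1, Equiv.Perm.sign_mul, Equiv.Perm.viaFintypeEmbedding_sign]
    push_cast
    rcases Int.units_eq_one_or (Equiv.Perm.sign σ₁) with h | h <;> rw [h] <;> push_cast <;> ring
  calc (∑ σ₁ : Equiv.Perm (Fin m), ∑ σ₂ : Equiv.Perm (Fin n),
        ((Equiv.Perm.sign σ₁ : ℤ) : ℂ) * ((Equiv.Perm.sign σ₂ : ℤ) : ℂ) * η σ₁ σ₂)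
      = ∑ _σ₁ : Equiv.Perm (Fin m),
          ∑ σ : Equiv.Perm (Fin n), ((Equiv.Perm.sign σ : ℤ) : ℂ) * η 1 σ :=
        Finset.sum_congr rfl fun σ₁ _ => key σ₁
    _ = (m.factorial : ℂ) * ∑ σ : Equiv.Perm (Fin n), ((Equiv.Perm.sign σ : ℤ) : ℂ) * η 1 σ := by
        rw [Finset.sum_const, Finset.card_univ, Fintype.card_perm, nsmul_eq_mul, Fintype.card_fin]
end

section
/- Let N_t ≥ N_r ≥ 1 be integers. For R ≥ 0 let D_R := { λ ∈ ℝ^{N_r} : λ_i > 0 for all i, and ∏_{i=1}^{N_r} (1 + λ_i) ≤ 2^R }, and define F(R) := ∫_{D_R} ( ∏_{1 ≤ i < j ≤ N_r} (λ_j − λ_i) )² · ∏_{i=1}^{N_r} λ_i^{N_t − N_r} dλ₁ ⋯ dλ_{N_r}. Then F is a monotonically nondecreasing and convex function of R on [0, ∞). -/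
/-!
The homothety of ratio `a ≥ 1` centred at `(-1, …, -1)` multiplies `∏ (1 + λᵢ)` by `a ^ N_r`, so
for `a ^ N_r = 2 ^ (y - x)` it maps the slab `D_{x+h} \ D_x` into `D_{y+h} \ D_y`. It does not
decrease the integrand (the Vandermonde determinant is scaled by a power of `a`, each `λᵢ` grows)
and its Jacobian `a ^ N_r` is at least `1`. Hence `F (x + h) - F x` is nondecreasing in `x`, and a
monotone function with this property is convex: cut `[x, y]` and `[y, z]` into steps of a common
small length, compare the increments, and let the length tend to `0`.
-/

open MeasureTheory Finset Filter Topology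

theorem Finset.card_nsmul_sum_le_card_nsmul_sum {α β M : Type*} [AddCommMonoid M] [PartialOrder M]
    [IsOrderedAddMonoid M] {s : Finset α} {t : Finset β} {u : α → M} {w : β → M}
    (h : ∀ i ∈ s, ∀ j ∈ t, u i ≤ w j) :
    #t • ∑ i ∈ s, u i ≤ #s • ∑ j ∈ t, w j :=
  calc #t • ∑ i ∈ s, u i = ∑ _j ∈ t, ∑ i ∈ s, u i := (sum_const _).symm
    _ ≤ ∑ _j ∈ t, ∑ i ∈ s, w _j := sum_le_sum fun j hj => sum_le_sum fun i hi => h i hi j hj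
    _ = #s • ∑ j ∈ t, w j := by rw [sum_comm, sum_const]

section Wright

variable {F : ℝ → ℝ}
  (hF : ∀ ⦃u v h : ℝ⦄, u ≤ v → 0 ≤ h → F (u + h) - F u ≤ F (v + h) - F v)
include hF

theorem mul_sub_le_mul_sub_of_wright {x y d : ℝ} (hd : 0 ≤ d) (p q : ℕ) (hxy : x + p * d ≤ y) :
    q * (F (x + p * d) - F x) ≤ p * (F (y + q * d) - F y) := by
  have telescope (z : ℝ) (m : ℕ) :
      F (z + m * d) - F z = ∑ i ∈ range m, (F (z + (i + 1 : ℕ) * d) - F (z + i * d)) := by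
    rw [sum_range_sub (fun i : ℕ => F (z + i * d))]
    simp
  have step : ∀ i ∈ range p, ∀ j ∈ range q,
      F (x + (i + 1 : ℕ) * d) - F (x + i * d) ≤ F (y + (j + 1 : ℕ) * d) - F (y + j * d) := by
    intro i hi j _
    have hij : x + i * d ≤ y + j * d := by
      have : (i : ℝ) ≤ p := by exact_mod_cast (mem_range.1 hi).le
      nlinarith [(j.cast_nonneg : (0 : ℝ) ≤ j)]
    convert hF hij hd using 3 <;> push_cast <;> ring
  simpa only [telescope, card_range, nsmul_eq_mul] using card_nsmul_sum_le_card_nsmul_sum step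

theorem convexOn_univ_of_monotone_of_wright (hmono : Monotone F) : ConvexOn ℝ Set.univ F := by
  refine convexOn_of_slope_mono_adjacent convex_univ fun {x y z} _ _ hxy hyz => ?_
  rw [div_le_div_iff₀ (sub_pos.2 hxy) (sub_pos.2 hyz)]
  have hFxy : 0 ≤ F y - F x := sub_nonneg.2 (hmono hxy.le)
  -- Compare `[x, y]`, cut into `n` steps of length `d`, with the `⌊(z - y) / d⌋` steps after `y`.
  have approx : ∀ n : ℕ, 0 < n → (F y - F x) * (z - y - (y - x) / n) ≤ (F z - F y) * (y - x) := by
    intro n hn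
    set d := (y - x) / n
    set q := ⌊(z - y) / d⌋₊
    have hd : 0 < d := div_pos (sub_pos.2 hxy) (Nat.cast_pos.2 hn)
    have hnd : n * d = y - x := mul_div_cancel₀ _ (Nat.cast_ne_zero.2 hn.ne')
    have hqd : z - y - d ≤ q * d := by
      have := (div_lt_iff₀ hd).1 (Nat.lt_floor_add_one ((z - y) / d))
      linarith
    have hqz : y + q * d ≤ z := by
      have := (le_div_iff₀ hd).1 (Nat.floor_le (div_pos (sub_pos.2 hyz) hd).le)
      linarith
    have hwright := mul_sub_le_mul_sub_of_wright hF (x := x) (y := y) hd.le n q (by linarith)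
    rw [show x + n * d = y by linarith] at hwright
    calc (F y - F x) * (z - y - d) ≤ (F y - F x) * (q * d) := mul_le_mul_of_nonneg_left hqd hFxy
      _ = d * (q * (F y - F x)) := by ring
      _ ≤ d * (n * (F (y + q * d) - F y)) := mul_le_mul_of_nonneg_left hwright hd.le
      _ ≤ d * (n * (F z - F y)) := by gcongr; exact hmono hqz
      _ = (F z - F y) * (y - x) := by rw [← hnd]; ring
  have hlim : Tendsto (fun n : ℕ => (F y - F x) * (z - y - (y - x) / n)) atTop
      (𝓝 ((F y - F x) * (z - y))) := by
    simpa using ((tendsto_const_div_atTop_nhds_zero_nat (y - x)).const_sub (z - y)).const_mul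
      (F y - F x)
  exact le_of_tendsto hlim (eventually_atTop.2 ⟨1, approx⟩)

end Wright

theorem homothety_neg_one_apply {ι : Type*} (a : ℝ) (v : ι → ℝ) (i : ι) :
    AffineMap.homothety (-1) a v i = a * (1 + v i) - 1 := by
  simp only [AffineMap.homothety_apply, vsub_eq_sub, vadd_eq_add, Pi.add_apply, Pi.smul_apply,
    Pi.sub_apply, Pi.neg_apply, Pi.one_apply, smul_eq_mul]
  ring

theorem le_homothety_of_le {ι : Type*} {c v : ι → ℝ} {a : ℝ} (ha : 1 ≤ a) (hcv : c ≤ v) :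
    v ≤ AffineMap.homothety c a v := fun i => by
  have := hcv i
  simp only [AffineMap.homothety_apply, vsub_eq_sub, vadd_eq_add, Pi.add_apply, Pi.smul_apply,
    Pi.sub_apply, smul_eq_mul]
  nlinarith

theorem setLIntegral_le_setLIntegral_image_homothety {E : Type*} [NormedAddCommGroup E]
    [NormedSpace ℝ E] [FiniteDimensional ℝ E] [MeasurableSpace E] [BorelSpace E]
    (μ : Measure E) [μ.IsAddHaarMeasure] (c : E) {r : ℝ} (hr : 1 ≤ r) {s : Set E}
    (hs : MeasurableSet s) {f : E → ENNReal} (hf : ∀ x ∈ s, f x ≤ f (AffineMap.homothety c r x)) :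
    ∫⁻ x in s, f x ∂μ ≤ ∫⁻ x in AffineMap.homothety c r '' s, f x ∂μ := by
  have hderiv (x : E) : HasFDerivAt (AffineMap.homothety c r)
      (r • ContinuousLinearMap.id ℝ E) x :=
    ((hasFDerivAt_id x).sub_const c).const_smul r |>.add_const c
  have hdet : (r • ContinuousLinearMap.id ℝ E).det = r ^ Module.finrank ℝ E := by
    simp [ContinuousLinearMap.det, LinearMap.det_smul]
  rw [lintegral_image_eq_lintegral_abs_det_fderiv_mul μ hs (fun x _ => (hderiv x).hasFDerivWithinAt)
    (AffineMap.homothety_injective c (by positivity)).injOn, hdet]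
  refine setLIntegral_mono' hs fun x hx => le_mul_of_one_le_of_le ?_ (hf x hx)
  rw [ENNReal.one_le_ofReal, abs_of_nonneg (by positivity)]
  exact one_le_pow₀ hr

def outageRegion (ι : Type*) [Fintype ι] (R : ℝ) : Set (ι → ℝ) :=
  {v | (∀ i, 0 < v i) ∧ ∏ i, (1 + v i) ≤ (2 : ℝ) ^ R}

namespace outageRegion

variable {ι : Type*} [Fintype ι]

theorem measurableSet (R : ℝ) : MeasurableSet (outageRegion ι R) := by
  rw [outageRegion, Set.ofPred_and, Set.ofPred_forall]
  exact .inter (.iInter fun i => measurableSet_lt measurable_const (measurable_pi_apply i))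
    (measurableSet_le (Finset.measurable_prod _ fun i _ => by fun_prop) measurable_const)

theorem mono : Monotone (outageRegion ι) := fun _ _ h _ hv =>
  ⟨hv.1, hv.2.trans (Real.rpow_le_rpow_of_exponent_le one_le_two h)⟩

theorem subset_Icc (R : ℝ) : outageRegion ι R ⊆ Set.Icc 0 (fun _ => (2 : ℝ) ^ R) := by
  rintro v ⟨hpos, hle⟩
  refine ⟨fun i => (hpos i).le, fun i => ?_⟩
  have hone : ∀ j, 1 ≤ 1 + v j := fun j => by linarith [hpos j]
  calc v i ≤ ∏ j ∈ {i}, (1 + v j) := by rw [prod_singleton]; linarith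
    _ ≤ ∏ j, (1 + v j) := prod_le_prod_of_subset_of_one_le (subset_univ _)
          (fun j _ => zero_le_one.trans (hone j)) (fun j _ _ => hone j)
    _ ≤ 2 ^ R := hle

theorem homothety_mem_iff {a t R : ℝ} (ha : 1 ≤ a) (hat : a ^ Fintype.card ι = 2 ^ t)
    {v : ι → ℝ} (hv : ∀ i, 0 < v i) :
    AffineMap.homothety (-1) a v ∈ outageRegion ι (R + t) ↔ v ∈ outageRegion ι R := by
  have hprod : ∏ i, (1 + AffineMap.homothety (-1) a v i) = (∏ i, (1 + v i)) * 2 ^ t := by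
    simp only [homothety_neg_one_apply, add_sub_cancel, prod_mul_distrib, prod_const, card_univ,
      hat, mul_comm]
  have hpos : ∀ i, 0 < AffineMap.homothety (-1) a v i := fun i => by
    rw [homothety_neg_one_apply]; nlinarith [hv i]
  simp only [outageRegion, Set.mem_ofPred_eq, hprod, hpos, hv, implies_true, true_and,
    Real.rpow_add two_pos, mul_le_mul_iff_left₀ (Real.rpow_pos_of_pos two_pos t)]

theorem mapsTo_homothety_sdiff {a x y : ℝ} (ha : 1 ≤ a) (hat : a ^ Fintype.card ι = 2 ^ (y - x))
    (h : ℝ) : Set.MapsTo (AffineMap.homothety (-1) a)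
      (outageRegion ι (x + h) \ outageRegion ι x) (outageRegion ι (y + h) \ outageRegion ι y) := by
  rintro v ⟨hvh, hvx⟩
  have hv := hvh.1
  rw [← homothety_mem_iff ha hat hv] at hvh hvx
  rw [show x + h + (y - x) = y + h by ring] at hvh
  rw [show x + (y - x) = y by ring] at hvx
  exact ⟨hvh, hvx⟩

end outageRegion

theorem setIntegral_le_setIntegral_of_setLIntegral_le {α : Type*} [MeasurableSpace α]
    {μ : Measure α} {f : α → ℝ} {s t : Set α} (hfs : AEStronglyMeasurable f (μ.restrict s))
    (hft : IntegrableOn f t μ) (hs : 0 ≤ᵐ[μ.restrict s] f) (ht : 0 ≤ᵐ[μ.restrict t] f)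
    (h : ∫⁻ x in s, ENNReal.ofReal (f x) ∂μ ≤ ∫⁻ x in t, ENNReal.ofReal (f x) ∂μ) :
    ∫ x in s, f x ∂μ ≤ ∫ x in t, f x ∂μ := by
  rw [integral_eq_lintegral_of_nonneg_ae hs hfs,
    integral_eq_lintegral_of_nonneg_ae ht hft.aestronglyMeasurable]
  exact ENNReal.toReal_mono hft.lintegral_lt_top.ne h

section Integral

variable {ι : Type*} [Fintype ι] {f : (ι → ℝ) → ℝ}

theorem integrableOn_outageRegion (hf : LocallyIntegrable f) (R : ℝ) :
    IntegrableOn f (outageRegion ι R) :=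
  (hf.integrableOn_isCompact isCompact_Icc).mono_set (outageRegion.subset_Icc R)

theorem ae_restrict_outageRegion_nonneg (hf₀ : ∀ v, (∀ i, 0 < v i) → 0 ≤ f v) {s : Set (ι → ℝ)}
    (hs : MeasurableSet s) {R : ℝ} (hsR : s ⊆ outageRegion ι R) : 0 ≤ᵐ[volume.restrict s] f :=
  ae_restrict_of_forall_mem hs fun v hv => hf₀ v (hsR hv).1

theorem monotone_integral_outageRegion (hf : LocallyIntegrable f)
    (hf₀ : ∀ v, (∀ i, 0 < v i) → 0 ≤ f v) :
    Monotone fun R => ∫ v in outageRegion ι R, f v := fun _ R h =>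
  setIntegral_mono_set (integrableOn_outageRegion hf R)
    (ae_restrict_outageRegion_nonneg hf₀ (outageRegion.measurableSet R) subset_rfl)
    (outageRegion.mono h).eventuallyLE

variable [Nonempty ι]

theorem integral_outageRegion_sdiff_le (hf : LocallyIntegrable f)
    (hf₀ : ∀ v, (∀ i, 0 < v i) → 0 ≤ f v)
    (hf_homothety : ∀ a : ℝ, 1 ≤ a → ∀ v, (∀ i, 0 < v i) → f v ≤ f (AffineMap.homothety (-1) a v))
    {x y : ℝ} (hxy : x ≤ y) (h : ℝ) :
    ∫ v in outageRegion ι (x + h) \ outageRegion ι x, f v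
      ≤ ∫ v in outageRegion ι (y + h) \ outageRegion ι y, f v := by
  set a : ℝ := 2 ^ ((y - x) / Fintype.card ι)
  have ha : 1 ≤ a := Real.one_le_rpow one_le_two (div_nonneg (sub_nonneg.2 hxy) (Nat.cast_nonneg _))
  have hat : a ^ Fintype.card ι = 2 ^ (y - x) := by
    rw [← Real.rpow_mul_natCast zero_le_two,
      div_mul_cancel₀ _ (Nat.cast_ne_zero.2 Fintype.card_ne_zero)]
  have hmeas (z : ℝ) : MeasurableSet (outageRegion ι (z + h) \ outageRegion ι z) :=
    (outageRegion.measurableSet _).diff (outageRegion.measurableSet z)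
  have hint (z : ℝ) : IntegrableOn f (outageRegion ι (z + h) \ outageRegion ι z) :=
    (integrableOn_outageRegion hf _).mono_set Set.sdiff_subset
  refine setIntegral_le_setIntegral_of_setLIntegral_le (hint x).aestronglyMeasurable (hint y)
    (ae_restrict_outageRegion_nonneg hf₀ (hmeas x) Set.sdiff_subset)
    (ae_restrict_outageRegion_nonneg hf₀ (hmeas y) Set.sdiff_subset) ?_
  calc _ ≤ ∫⁻ v in AffineMap.homothety (-1) a '' (outageRegion ι (x + h) \ outageRegion ι x),
          ENNReal.ofReal (f v) :=
        setLIntegral_le_setLIntegral_image_homothety volume (-1) ha (hmeas x) fun v hv =>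
          ENNReal.ofReal_le_ofReal (hf_homothety a ha v hv.1.1)
    _ ≤ _ := lintegral_mono_set (outageRegion.mapsTo_homothety_sdiff ha hat h).image_subset

theorem convexOn_integral_outageRegion (hf : LocallyIntegrable f)
    (hf₀ : ∀ v, (∀ i, 0 < v i) → 0 ≤ f v)
    (hf_homothety : ∀ a : ℝ, 1 ≤ a → ∀ v, (∀ i, 0 < v i) → f v ≤ f (AffineMap.homothety (-1) a v)) :
    ConvexOn ℝ Set.univ fun R => ∫ v in outageRegion ι R, f v := by
  refine convexOn_univ_of_monotone_of_wright (fun x y h hxy hh => ?_)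
    (monotone_integral_outageRegion hf hf₀)
  have hsdiff (z : ℝ) := setIntegral_sdiff (outageRegion.measurableSet z)
    (integrableOn_outageRegion hf (z + h)) (outageRegion.mono (le_add_of_nonneg_right hh))
  rw [← hsdiff x, ← hsdiff y]
  exact integral_outageRegion_sdiff_le hf hf₀ hf_homothety hxy h

end Integral

theorem sq_det_vandermonde_le_sq_det_vandermonde_smul {n : ℕ} {a : ℝ} (ha : 1 ≤ |a|)
    (v : Fin n → ℝ) : (Matrix.vandermonde v).det ^ 2 ≤ (Matrix.vandermonde (a • v)).det ^ 2 := by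
  have hscale : (Matrix.vandermonde (a • v)).det
      = (∏ i : Fin n, ∏ _j ∈ Ioi i, a) * (Matrix.vandermonde v).det := by
    simp only [Matrix.det_vandermonde, Pi.smul_apply, smul_eq_mul, ← mul_sub, prod_mul_distrib]
  have hone : 1 ≤ (∏ i : Fin n, ∏ _j ∈ Ioi i, a) ^ 2 := by
    simp only [← prod_pow]
    exact one_le_prod fun _ _ => one_le_prod fun _ _ => (one_le_sq_iff_one_le_abs a).2 ha
  rw [hscale, mul_pow]
  exact le_mul_of_one_le_left (sq_nonneg _) hone

theorem sq_det_vandermonde_le_sq_det_vandermonde_homothety {n : ℕ} {a : ℝ} (ha : 1 ≤ |a|)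
    (v : Fin n → ℝ) :
    (Matrix.vandermonde v).det ^ 2 ≤ (Matrix.vandermonde (AffineMap.homothety (-1) a v)).det ^ 2 := by
  have htranslate : AffineMap.homothety (-1) a v = fun i => (a • v) i + (a - 1) := by
    ext i
    rw [homothety_neg_one_apply]
    simp only [Pi.smul_apply, smul_eq_mul]
    ring
  rw [htranslate, Matrix.det_vandermonde_add]
  exact sq_det_vandermonde_le_sq_det_vandermonde_smul ha v

theorem sq_det_vandermonde_mul_prod_pow_le_homothety {n : ℕ} (k : ℕ) {a : ℝ} (ha : 1 ≤ a)
    {v : Fin n → ℝ} (hv : ∀ i, 0 ≤ v i) :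
    (Matrix.vandermonde v).det ^ 2 * ∏ i, v i ^ k
      ≤ (Matrix.vandermonde (AffineMap.homothety (-1) a v)).det ^ 2
        * ∏ i, AffineMap.homothety (-1) a v i ^ k := by
  have hle := le_homothety_of_le (c := -1) (v := v) ha fun i => by
    simp only [Pi.neg_apply, Pi.one_apply]; linarith [hv i]
  exact mul_le_mul
    (sq_det_vandermonde_le_sq_det_vandermonde_homothety (ha.trans (le_abs_self a)) v)
    (prod_le_prod (fun i _ => pow_nonneg (hv i) _) fun i _ => pow_le_pow_left₀ (hv i) (hle i) _)
    (prod_nonneg fun i _ => pow_nonneg (hv i) _) (sq_nonneg _)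

theorem outage_integral_monotone_convex_general (Nt Nr : ℕ) (h1 : 1 ≤ Nr) :
    MonotoneOn (fun R : ℝ =>
      ∫ v in {v : Fin Nr → ℝ | (∀ i, 0 < v i) ∧ ∏ i, (1 + v i) ≤ (2 : ℝ) ^ R},
        (∏ i, ∏ j ∈ Ioi i, (v j - v i)) ^ 2 * ∏ i, v i ^ (Nt - Nr)) (Set.Ici 0) ∧
    ConvexOn ℝ (Set.Ici 0) (fun R : ℝ =>
      ∫ v in {v : Fin Nr → ℝ | (∀ i, 0 < v i) ∧ ∏ i, (1 + v i) ≤ (2 : ℝ) ^ R},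
        (∏ i, ∏ j ∈ Ioi i, (v j - v i)) ^ 2 * ∏ i, v i ^ (Nt - Nr)) := by
  have : Nonempty (Fin Nr) := Fin.pos_iff_nonempty.1 h1
  set f : (Fin Nr → ℝ) → ℝ := fun v => (Matrix.vandermonde v).det ^ 2 * ∏ i, v i ^ (Nt - Nr)
  have hf : LocallyIntegrable f := by
    refine Continuous.locallyIntegrable ?_
    simp only [f, Matrix.det_vandermonde]
    fun_prop
  have hf₀ : ∀ v : Fin Nr → ℝ, (∀ i, 0 < v i) → 0 ≤ f v := fun v hv =>
    mul_nonneg (sq_nonneg _) (prod_nonneg fun i _ => pow_nonneg (hv i).le _)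
  have hf_homothety : ∀ a : ℝ, 1 ≤ a → ∀ v : Fin Nr → ℝ, (∀ i, 0 < v i) →
      f v ≤ f (AffineMap.homothety (-1) a v) := fun a ha v hv =>
    sq_det_vandermonde_mul_prod_pow_le_homothety _ ha fun i => (hv i).le
  have hmono := monotone_integral_outageRegion hf hf₀
  have hconv := convexOn_integral_outageRegion hf hf₀ hf_homothety
  simp only [f, Matrix.det_vandermonde] at hmono hconv
  exact ⟨hmono.monotoneOn _, hconv.subset (Set.subset_univ _) (convex_Ici 0)⟩

/-- Theorem 6 of the paper: the function `g₀(R)` (stated here, via Remark 1, through its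
integral representation `F(R)` over the outage region
`D_R = {λ : λᵢ > 0, ∏ (1 + λᵢ) ≤ 2^R}`) is monotonically nondecreasing and convex in the
transmission rate `R` on `[0, ∞)`. -/
theorem outage_integral_monotone_convex (Nt Nr : ℕ) (h1 : 1 ≤ Nr) (h2 : Nr ≤ Nt) :
    MonotoneOn (fun R : ℝ =>
      ∫ v in {v : Fin Nr → ℝ | (∀ i, 0 < v i) ∧ ∏ i, (1 + v i) ≤ (2 : ℝ) ^ R},
        (∏ i, ∏ j ∈ Ioi i, (v j - v i)) ^ 2 * ∏ i, v i ^ (Nt - Nr)) (Set.Ici 0) ∧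
    ConvexOn ℝ (Set.Ici 0) (fun R : ℝ =>
      ∫ v in {v : Fin Nr → ℝ | (∀ i, 0 < v i) ∧ ∏ i, (1 + v i) ≤ (2 : ℝ) ^ R},
        (∏ i, ∏ j ∈ Ioi i, (v j - v i)) ^ 2 * ∏ i, v i ^ (Nt - Nr)) :=
  outage_integral_monotone_convex_general Nt Nr h1
end

section
/- Let 1 ≤ p ≤ n be integers, let r₁, …, r_n be nonzero real numbers, and let m : {1,…,p} → {n−p, n−p+1, …, n−1} be a bijection. Let M be the n × n real matrix with entries M_{ij} = r_j^{n − p − m(i) − 1} for 1 ≤ i ≤ p (these exponents lie in {−p,…,−1}) and M_{ij} = r_j^{i − p − 1} for p + 1 ≤ i ≤ n (1 ≤ j ≤ n). Then det(M) = (−1)^{p(p−1)/2} · sgn(π_m) · ( ∏_{j=1}^{n} r_j )^{−p} · ∏_{1 ≤ i < j ≤ n} (r_j − r_i), where π_m ∈ S_p is the permutation defined by π_m(i) = m(i) − (n − p) + 1. -/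
open Finset Equiv Matrix

lemma revPerm_succ_eq (n : ℕ) :
    (Fin.revPerm : Perm (Fin (n+1))) =
      finRotate (n+1) *
        (finSuccEquivLast.symm.permCongr (Fin.revPerm : Perm (Fin n)).optionCongr) := by
  ext i
  refine Fin.lastCases ?_ (fun x => ?_) i
  · simp [Perm.mul_apply, Equiv.permCongr_apply, Fin.rev_last]
  · simp only [Perm.mul_apply, Equiv.permCongr_apply, Equiv.symm_symm,
      finSuccEquivLast_castSucc, optionCongr_apply, Option.map_some,
      finSuccEquivLast_symm_some, Fin.revPerm_apply]
    rw [finRotate_succ_apply]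
    simp [Fin.rev, Fin.add_def, Fin.ext_iff]
    rw [Nat.mod_eq_of_lt (by omega)]
    omega

lemma sign_revPerm (n : ℕ) :
    Equiv.Perm.sign (Fin.revPerm : Perm (Fin n)) = (-1) ^ (n * (n - 1) / 2) := by
  induction n with
  | zero => simp [Subsingleton.elim (Fin.revPerm : Perm (Fin 0)) 1]
  | succ n ih =>
    rw [revPerm_succ_eq, _root_.map_mul, sign_finRotate, Equiv.Perm.sign_permCongr,
      Equiv.optionCongr_sign, ih, ← pow_add]
    congr 1
    have h2 : (n + 1) * n = n * (n - 1) + 2 * n := by cases n with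
      | zero => rfl
      | succ m => simp only [Nat.succ_sub_one]; ring
    simp only [Nat.add_sub_cancel, h2]
    omega

/-- The block determinant identity (88) of the paper (Appendix H, semi-correlated case
with `N_t < N_r`).  The bijection `m : {1,…,p} → {n-p,…,n-1}` is encoded 0-based by a
permutation `π` of `Fin p` via `m(i) = (n-p) + π(i)`, so `π_m = π`.  The top `p` rows
carry the exponents `n - p - m(i) - 1 = -π(i) - 1 ∈ {-p,…,-1}` and the bottom rows carry
the exponents `i - p - 1` (1-based), i.e. `0, 1, …, n-p-1`. -/
theorem det_block_vandermonde_negative_exponents (n p : ℕ) (hp : 1 ≤ p) (hpn : p ≤ n)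
    (r : Fin n → ℝ) (hr : ∀ j, r j ≠ 0) (π : Equiv.Perm (Fin p)) :
    Matrix.det (Matrix.of fun i j : Fin n =>
        if h : (i : ℕ) < p then r j ^ (-((π ⟨i, h⟩ : ℕ) : ℤ) - 1)
        else r j ^ (((i : ℕ) : ℤ) - (p : ℤ)))
      = (-1) ^ (p * (p - 1) / 2) * ((Equiv.Perm.sign π : ℤ) : ℝ) *
          (∏ j, r j) ^ (-(p : ℤ)) * ∏ i, ∏ j ∈ Ioi i, (r j - r i) := by
  set σ : Perm (Fin n) :=
    Equiv.Perm.viaFintypeEmbedding (π.trans Fin.revPerm) (Fin.castLEEmb hpn) with hσ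
  have hsign : Equiv.Perm.sign σ = Equiv.Perm.sign π * (-1) ^ (p * (p - 1) / 2) := by
    rw [hσ]
    simp only [Equiv.Perm.viaFintypeEmbedding, Equiv.Perm.sign_extendDomain]
    have : π.trans Fin.revPerm = Fin.revPerm * π := rfl
    rw [this, _root_.map_mul, sign_revPerm, mul_comm]
  have hσval : ∀ i : Fin n, ((σ i : ℕ) : ℤ) =
      if h : (i : ℕ) < p then (p : ℤ) - ((π ⟨i, h⟩ : ℕ) : ℤ) - 1 else (i : ℕ) := by
    intro i
    by_cases h : (i : ℕ) < p
    · have hi : i = Fin.castLEEmb hpn ⟨i, h⟩ := by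
        simp [Fin.castLEEmb, Fin.ext_iff]
      rw [dif_pos h, hσ]
      conv_lhs => rw [hi, Equiv.Perm.viaFintypeEmbedding_apply_image]
      have := (π ⟨i, h⟩).is_lt
      simp only [Equiv.trans_apply, Fin.revPerm_apply, Fin.castLEEmb, Fin.coe_castLE,
        Function.Embedding.coeFn_mk, Fin.val_rev]
      omega
    · rw [dif_neg h, hσ, Equiv.Perm.viaFintypeEmbedding_apply_notMem_range]
      rintro ⟨a, rfl⟩
      exact h (by simpa [Fin.castLEEmb] using a.is_lt)
  have hM : (Matrix.of fun i j : Fin n =>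
        if h : (i : ℕ) < p then r j ^ (-((π ⟨i, h⟩ : ℕ) : ℤ) - 1)
        else r j ^ (((i : ℕ) : ℤ) - (p : ℤ)))
      = Matrix.of fun i j : Fin n =>
          r j ^ (-(p : ℤ)) * ((Matrix.vandermonde r)ᵀ.submatrix σ id) i j := by
    ext i j
    have hσi := hσval i
    simp only [Matrix.of_apply, Matrix.submatrix_apply, Matrix.transpose_apply,
      Matrix.vandermonde_apply, id]
    rw [← zpow_natCast (r j) (σ i : ℕ), ← zpow_add₀ (hr j)]
    by_cases h : (i : ℕ) < p
    · rw [dif_pos h]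
      rw [dif_pos h] at hσi
      congr 1
      omega
    · rw [dif_neg h]
      rw [dif_neg h] at hσi
      congr 1
      omega
  rw [hM, Matrix.det_mul_row, Matrix.det_permute, Matrix.det_transpose,
    Matrix.det_vandermonde, Finset.prod_zpow, hsign]
  push_cast
  ring
end
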